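/- arXiv:1701.07616 — 5 statements merged into one kernel-verified Lean document; each statement's English description precedes it below -/
import Mathlib

section
/- Let p ≥ 1, let T_p be an invertible p×p matrix over F₂, let n ≥ 0, and set G = T₂^{⊗n} ⊗ T_p, an invertible N×N matrix over F₂ with N = 2^n·p. Then for every K with 1 ≤ K ≤ N, the spectrum value S_G(K) equals the K-th largest element (counted with multiplicity) of the N-element multiset of products { S_{T₂^{⊗n}}(i) · S_{T_p}(j) : 1 ≤ i ≤ 2^n, 1 ≤ j ≤ p }. -/
open Matrix

noncomputable section

abbrev F2 : Type := ZMod 2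

/-- The Arikan kernel `T₂ = ((1,0),(1,1))` over `F₂`. -/
def T2 : Matrix (Fin 2) (Fin 2) F2 := !![1, 0; 1, 1]

/-- Kronecker product of `Fin`-indexed square matrices, with the standard index
convention `(A ⊗ B) i j = A (i / n) (j / n) * B (i % n) (j % n)`. -/
def kron {m n : ℕ} (A : Matrix (Fin m) (Fin m) F2) (B : Matrix (Fin n) (Fin n) F2) :
    Matrix (Fin (m * n)) (Fin (m * n)) F2 :=
  fun i j => A i.divNat j.divNat * B i.modNat j.modNat

/-- The `n`-fold Kronecker power of `T₂` (with `T₂^{⊗0}` the 1×1 identity). -/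
def T2pow : (n : ℕ) → Matrix (Fin (2 ^ n)) (Fin (2 ^ n)) F2
  | 0 => 1
  | n + 1 => (kron T2 (T2pow n)).submatrix
      (Fin.cast (by rw [pow_succ, Nat.mul_comm]))
      (Fin.cast (by rw [pow_succ, Nat.mul_comm]))

/-- Minimum distance `d_G(I)`: the minimum Hamming weight of `u · G` over all
nonzero row vectors `u` with support contained in `I`. -/
def minDist {N : ℕ} (G : Matrix (Fin N) (Fin N) F2) (I : Finset (Fin N)) : ℕ :=
  sInf {w | ∃ u : Fin N → F2, u ≠ 0 ∧ (∀ i, u i ≠ 0 → i ∈ I) ∧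
    hammingNorm (Matrix.vecMul u G) = w}

/-- Minimum-distance spectrum `S_G(K)`: the maximum of `d_G(I)` over all
row-index sets `I` of size `K`. -/
def spec {N : ℕ} (G : Matrix (Fin N) (Fin N) F2) (K : ℕ) : ℕ :=
  sSup {d | ∃ I : Finset (Fin N), I.card = K ∧ minDist G I = d}

/-- `K`-th largest element (1-indexed, counted with multiplicity) of a
multiset of natural numbers. -/
def kthLargest (s : Multiset ℕ) (K : ℕ) : ℕ :=
  ((s.sort (· ≤ ·)).reverse).getD (K - 1) 0

/-!
`S_G(K) ≥ m` exactly when some `K` rows of `G` span only nonzero codewords of weight `≥ m`.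
Split a row vector `u` of `T₂ ⊗ G` into its blocks `(u₀, u₁)` along the rows `(1, 0)` and
`(1, 1)` of `T₂`; then `wt(u (T₂ ⊗ G)) = wt((u₀ + u₁) G) + wt(u₁ G)`. A vector with `u₀ = 0`
has weight `2 wt(u₁ G)`, and one with `u₀ ≠ 0` has weight at least `wt(u₀ G)` by the triangle
inequality. Hence `S_{T₂ ⊗ G}(K) = max_{a + b = K} min (2 S_G(a), S_G(b))` (reading `S_G(0)`
as `∞`), which says that the multiset of values of `S_{T₂ ⊗ G}` is `2 · {S_G} + {S_G}`.
As `T₂^{⊗(n+1)} ⊗ T_p ≅ T₂ ⊗ (T₂^{⊗n} ⊗ T_p)`, induction on `n` shows that the values of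
`S_{T₂^{⊗n} ⊗ T_p}` form the multiset of products `S_{T₂^{⊗n}}(i) · S_{T_p}(j)`; since a
spectrum is non-increasing, `S_G(K)` is the `K`-th largest of its own values.
-/

open Finset

section OrderStatistics

theorem List.Pairwise.le_getElem_iff_lt_countP {l : List ℕ} (hl : l.Pairwise (· ≥ ·)) (m : ℕ)
    {i : ℕ} (hi : i < l.length) : m ≤ l[i] ↔ i < l.countP (m ≤ ·) := by
  induction l generalizing i with
  | nil => simp at hi
  | cons x t ih =>
    rw [List.pairwise_cons] at hl
    by_cases hmx : m ≤ x
    · cases i with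
      | zero => simp [hmx]
      | succ j => simp [hmx, ih hl.2 (by simpa using hi)]
    · have hcount : t.countP (m ≤ ·) = 0 :=
        List.countP_eq_zero.2 fun y hy => by have := hl.1 y hy; simp; omega
      cases i with
      | zero => simp [hcount, hmx]
      | succ j =>
        have := hl.1 _ (List.getElem_mem (l := t) (n := j) (by simpa using hi))
        simp [hcount, hmx]; omega

def seqValues (L : ℕ) (f : ℕ → ℕ) : Multiset ℕ :=
  (univ : Finset (Fin L)).val.map fun k => f (k.val + 1)

theorem card_seqValues (L : ℕ) (f : ℕ → ℕ) : Multiset.card (seqValues L f) = L := by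
  simp [seqValues]

theorem map_seqValues (g : ℕ → ℕ) (L : ℕ) (f : ℕ → ℕ) :
    (seqValues L f).map g = seqValues L (fun k => g (f k)) :=
  Multiset.map_map _ _ _

theorem seqValues_one (f : ℕ → ℕ) : seqValues 1 f = {f 1} := rfl

theorem seqValues_congr {L : ℕ} {f g : ℕ → ℕ} (h : ∀ k, 1 ≤ k → k ≤ L → f k = g k) :
    seqValues L f = seqValues L g :=
  Multiset.map_congr rfl fun (k : Fin L) _ => h _ (Nat.le_add_left 1 _) k.isLt

theorem kthLargest_coe {l : List ℕ} (hl : l.Pairwise (· ≥ ·)) (K : ℕ) :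
    kthLargest l K = l.getD (K - 1) 0 := by
  have hsort : ((l : Multiset ℕ).sort (· ≤ ·)) = l.reverse :=
    List.Perm.eq_of_pairwise (fun a b _ _ hab hba => le_antisymm hab hba)
      (Multiset.pairwise_sort _ _) (List.pairwise_reverse.2 hl)
      (Multiset.coe_eq_coe.1 (by rw [Multiset.sort_eq, Multiset.coe_reverse]))
  rw [kthLargest, hsort, List.reverse_reverse]

theorem seqValues_eq_coe_ofFn (L : ℕ) (f : ℕ → ℕ) :
    seqValues L f = ↑(List.ofFn fun k : Fin L => f (k + 1)) := by
  rw [seqValues, Fin.univ_val_map]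

theorem kthLargest_seqValues {L : ℕ} {f : ℕ → ℕ} (hf : AntitoneOn f (Set.Icc 1 L)) {K : ℕ}
    (hK1 : 1 ≤ K) (hKL : K ≤ L) : kthLargest (seqValues L f) K = f K := by
  have hl : (List.ofFn fun k : Fin L => f (k + 1)).Pairwise (· ≥ ·) :=
    List.pairwise_ofFn.2 fun i j hij =>
      hf ⟨by omega, by omega⟩ ⟨by omega, by omega⟩ (by rw [Fin.lt_def] at hij; omega)
  rw [seqValues_eq_coe_ofFn, kthLargest_coe hl, List.getD_eq_getElem _ _ (by simp; omega)]
  simp only [List.getElem_ofFn]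
  congr 1; omega

theorem Multiset.exists_pairwise_ge_coe_eq (M : Multiset ℕ) :
    ∃ l : List ℕ, l.Pairwise (· ≥ ·) ∧ (l : Multiset ℕ) = M :=
  ⟨(M.sort (· ≤ ·)).reverse, List.pairwise_reverse.2 (Multiset.pairwise_sort _ _),
    by rw [Multiset.coe_reverse, Multiset.sort_eq]⟩

theorem seqValues_kthLargest (M : Multiset ℕ) :
    seqValues (Multiset.card M) (kthLargest M) = M := by
  obtain ⟨l, hl, rfl⟩ := M.exists_pairwise_ge_coe_eq
  rw [seqValues_eq_coe_ofFn, Multiset.coe_card]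
  congr 1
  conv_rhs => rw [← List.ofFn_getElem (xs := l)]
  congr 1
  funext k
  rw [kthLargest_coe hl, Nat.add_sub_cancel, List.getD_eq_getElem]

theorem le_kthLargest_iff {M : Multiset ℕ} {K : ℕ} (hK1 : 1 ≤ K) (hK : K ≤ Multiset.card M)
    (m : ℕ) : m ≤ kthLargest M K ↔ K ≤ M.countP (m ≤ ·) := by
  obtain ⟨l, hl, rfl⟩ := M.exists_pairwise_ge_coe_eq
  rw [Multiset.coe_card] at hK
  rw [kthLargest_coe hl, List.getD_eq_getElem _ _ (by omega),
    hl.le_getElem_iff_lt_countP m, Multiset.coe_countP]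
  omega

theorem le_countP_seqValues_iff {L : ℕ} {f : ℕ → ℕ} (hf : AntitoneOn f (Set.Icc 1 L))
    {a : ℕ} (ha1 : 1 ≤ a) (ha : a ≤ L) (m : ℕ) :
    a ≤ (seqValues L f).countP (m ≤ ·) ↔ m ≤ f a := by
  rw [← le_kthLargest_iff ha1 (by rwa [card_seqValues]), kthLargest_seqValues hf ha1 ha]

theorem le_kthLargest_seqValues_add_iff {L₁ L₂ : ℕ} {f g : ℕ → ℕ}
    (hf : AntitoneOn f (Set.Icc 1 L₁)) (hg : AntitoneOn g (Set.Icc 1 L₂)) {K : ℕ}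
    (hK1 : 1 ≤ K) (hK : K ≤ L₁ + L₂) (m : ℕ) :
    m ≤ kthLargest (seqValues L₁ f + seqValues L₂ g) K ↔
      ∃ a b, a + b = K ∧ a ≤ L₁ ∧ b ≤ L₂ ∧ (1 ≤ a → m ≤ f a) ∧ (1 ≤ b → m ≤ g b) := by
  rw [le_kthLargest_iff hK1 (by rwa [Multiset.card_add, card_seqValues, card_seqValues]),
    Multiset.countP_add]
  have hc₁ := (Multiset.countP_le_card (m ≤ ·) (seqValues L₁ f)).trans (card_seqValues L₁ f).le
  have hc₂ := (Multiset.countP_le_card (m ≤ ·) (seqValues L₂ g)).trans (card_seqValues L₂ g).le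
  have h₁ := fun a ha1 ha => le_countP_seqValues_iff hf (a := a) ha1 ha m
  have h₂ := fun b hb1 hb => le_countP_seqValues_iff hg (a := b) hb1 hb m
  set c₁ := (seqValues L₁ f).countP (m ≤ ·)
  set c₂ := (seqValues L₂ g).countP (m ≤ ·)
  constructor
  · intro hKc
    exact ⟨min c₁ K, K - min c₁ K, by omega, by omega, by omega,
      fun ha => (h₁ _ ha (by omega)).1 (by omega), fun hb => (h₂ _ hb (by omega)).1 (by omega)⟩
  · rintro ⟨a, b, rfl, ha, hb, hfa, hgb⟩
    have hac : a ≤ c₁ := by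
      rcases Nat.eq_zero_or_pos a with rfl | ha1
      · exact Nat.zero_le _
      · exact (h₁ a ha1 ha).2 (hfa ha1)
    have hbc : b ≤ c₂ := by
      rcases Nat.eq_zero_or_pos b with rfl | hb1
      · exact Nat.zero_le _
      · exact (h₂ b hb1 hb).2 (hgb hb1)
    omega

end OrderStatistics

section PairwiseProducts

variable {α : Type*}

theorem Multiset.map_product_map {β γ δ : Type*} (s : Multiset α) (t : Multiset β) (f : α → γ)
    (g : β → δ) : s.map f ×ˢ t.map g = (s ×ˢ t).map (Prod.map f g) := by
  induction s using Multiset.induction with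
  | empty => rfl
  | cons a s ih => simp [ih, Multiset.map_map]

def pairwiseProducts [Mul α] (s t : Multiset α) : Multiset α :=
  (s ×ˢ t).map fun x => x.1 * x.2

theorem pairwiseProducts_add_left [Mul α] (s s' t : Multiset α) :
    pairwiseProducts (s + s') t = pairwiseProducts s t + pairwiseProducts s' t := by
  rw [pairwiseProducts, Multiset.add_product, Multiset.map_add]; rfl

theorem pairwiseProducts_map_mul_left [Semigroup α] (c : α) (s t : Multiset α) :
    pairwiseProducts (s.map (c * ·)) t = (pairwiseProducts s t).map (c * ·) := by
  induction s using Multiset.induction with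
  | empty => rfl
  | cons a s ih =>
    simp only [pairwiseProducts] at ih ⊢
    simp [ih, Multiset.map_map, mul_assoc]

theorem pairwiseProducts_singleton_one_left [MulOneClass α] (t : Multiset α) :
    pairwiseProducts {1} t = t := by
  rw [pairwiseProducts, ← Multiset.cons_zero, Multiset.cons_product, Multiset.zero_product,
    add_zero, Multiset.map_map]
  simp

theorem map_univ_prod_eq_pairwiseProducts (a b : ℕ) (f g : ℕ → ℕ) :
    (univ : Finset (Fin a × Fin b)).val.map (fun ij => f (ij.1.val + 1) * g (ij.2.val + 1)) =
      pairwiseProducts (seqValues a f) (seqValues b g) := by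
  rw [← univ_product_univ, product_val, pairwiseProducts, seqValues, seqValues,
    Multiset.map_product_map, Multiset.map_map]
  rfl

end PairwiseProducts

section Hamming

variable {ι β : Type*} [Fintype ι]

theorem hammingNorm_single [DecidableEq ι] [Zero β] [DecidableEq β] (i : ι) {b : β}
    (hb : b ≠ 0) : hammingNorm (Pi.single i b : ι → β) = 1 := by
  rw [hammingNorm, ← card_singleton i]
  congr 1
  ext j
  by_cases h : j = i <;> simp [h, hb]

theorem hammingNorm_sub_le [AddGroup β] [DecidableEq β] (x y : ι → β) :
    hammingNorm (x - y) ≤ hammingNorm x + hammingNorm y := by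
  classical
  refine (card_le_card fun i hi => ?_).trans (card_union_le _ _)
  simp only [mem_filter, mem_univ, true_and, mem_union] at hi ⊢
  by_contra! h
  simp [h] at hi

end Hamming

section MinimumDistance

variable {N : ℕ} (G : Matrix (Fin N) (Fin N) F2)

def MinDistGE (I : Finset (Fin N)) (m : ℕ) : Prop :=
  ∀ u : Fin N → F2, u ≠ 0 → Function.support u ⊆ I → m ≤ hammingNorm (u ᵥ* G)

variable {G}

theorem MinDistGE.mono {I I' : Finset (Fin N)} {m m' : ℕ} (h : MinDistGE G I' m)
    (hI : I ⊆ I') (hm : m' ≤ m) : MinDistGE G I m' :=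
  fun u hu hsupp => hm.trans (h u hu (hsupp.trans (by exact_mod_cast hI)))

theorem minDistGE_empty (m : ℕ) : MinDistGE G ∅ m := by
  intro u hu hsupp
  exact absurd (Function.support_eq_empty_iff.1 (by simpa using hsupp)) hu

variable (G)

theorem minDistGE_minDist (I : Finset (Fin N)) : MinDistGE G I (minDist G I) :=
  fun u hu hsupp => Nat.sInf_le ⟨u, hu, hsupp, rfl⟩

theorem minDist_le_card (I : Finset (Fin N)) : minDist G I ≤ N := by
  by_cases h : {w | ∃ u : Fin N → F2, u ≠ 0 ∧ (∀ i, u i ≠ 0 → i ∈ I) ∧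
      hammingNorm (u ᵥ* G) = w}.Nonempty
  · obtain ⟨u, -, -, hu⟩ := Nat.sInf_mem h
    rw [minDist, ← hu]
    exact hammingNorm_le_card_fintype.trans (Fintype.card_fin N).le
  · rw [minDist, Set.not_nonempty_iff_eq_empty.1 h, Nat.sInf_empty]
    exact Nat.zero_le N

theorem le_minDist {I : Finset (Fin N)} (hI : I.Nonempty) {m : ℕ} (h : MinDistGE G I m) :
    m ≤ minDist G I := by
  obtain ⟨i, hi⟩ := hI
  refine le_csInf ⟨_, Pi.single i 1, ?_, ?_, rfl⟩ ?_
  · exact Pi.single_ne_zero_iff.2 one_ne_zero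
  · exact Pi.support_single_subset.trans (Set.singleton_subset_iff.2 hi)
  · rintro _ ⟨u, hu, hsupp, rfl⟩
    exact h u hu hsupp

theorem le_spec_iff {K : ℕ} (hK1 : 1 ≤ K) (hK : K ≤ N) (m : ℕ) :
    m ≤ spec G K ↔ ∃ I : Finset (Fin N), I.card = K ∧ MinDistGE G I m := by
  have hne : {d | ∃ I : Finset (Fin N), I.card = K ∧ minDist G I = d}.Nonempty := by
    obtain ⟨I, -, hI⟩ := exists_subset_card_eq (s := (univ : Finset (Fin N))) (by simpa using hK)
    exact ⟨_, I, hI, rfl⟩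
  have hbdd : BddAbove {d | ∃ I : Finset (Fin N), I.card = K ∧ minDist G I = d} :=
    ⟨N, by rintro _ ⟨I, -, rfl⟩; exact minDist_le_card G I⟩
  constructor
  · intro hm
    obtain ⟨I, hIK, hI⟩ := Nat.sSup_mem hne hbdd
    exact ⟨I, hIK, (minDistGE_minDist G I).mono subset_rfl (hI ▸ hm)⟩
  · rintro ⟨I, hIK, hI⟩
    exact (le_minDist G (card_pos.1 (by omega)) hI).trans (le_csSup hbdd ⟨I, hIK, rfl⟩)

theorem exists_card_eq_minDistGE_spec {K : ℕ} (hK : K ≤ N) :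
    ∃ I : Finset (Fin N), I.card = K ∧ MinDistGE G I (spec G K) := by
  rcases Nat.eq_zero_or_pos K with rfl | hK1
  · exact ⟨∅, card_empty, minDistGE_empty _⟩
  · exact (le_spec_iff G hK1 hK _).1 le_rfl

theorem spec_antitoneOn : AntitoneOn (spec G) (Set.Icc 1 N) := by
  intro K hK K' hK' hKK'
  obtain ⟨I', hI'K', hI'⟩ := exists_card_eq_minDistGE_spec G hK'.2
  obtain ⟨I, hII', hIK⟩ := exists_subset_card_eq (hI'K' ▸ hKK')
  exact (le_spec_iff G hK.1 hK.2 _).2 ⟨I, hIK, hI'.mono hII' le_rfl⟩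

theorem spec_one {K : ℕ} (hK1 : 1 ≤ K) (hK : K ≤ N) :
    spec (1 : Matrix (Fin N) (Fin N) F2) K = 1 := by
  apply le_antisymm
  · obtain ⟨I, hIK, hI⟩ := exists_card_eq_minDistGE_spec (1 : Matrix (Fin N) (Fin N) F2) hK
    obtain ⟨i, hi⟩ := card_pos.1 (hIK ▸ hK1 : 0 < I.card)
    simpa [hammingNorm_single i one_ne_zero] using hI _ (Pi.single_ne_zero_iff.2 one_ne_zero)
      (Pi.support_single_subset.trans (Set.singleton_subset_iff.2 hi))
  · obtain ⟨I, -, hIK⟩ := exists_subset_card_eq (s := (univ : Finset (Fin N))) (by simpa using hK)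
    refine (le_spec_iff _ hK1 hK 1).2 ⟨I, hIK, fun u hu _ => ?_⟩
    rw [vecMul_one]
    exact hammingNorm_pos_iff.2 hu

end MinimumDistance

section Blocks

variable {m n : ℕ}

@[simp] theorem divNat_finProdFinEquiv (a : Fin m) (b : Fin n) :
    (finProdFinEquiv (a, b)).divNat = a :=
  congrArg Prod.fst (finProdFinEquiv.symm_apply_apply (a, b))

@[simp] theorem modNat_finProdFinEquiv (a : Fin m) (b : Fin n) :
    (finProdFinEquiv (a, b)).modNat = b :=
  congrArg Prod.snd (finProdFinEquiv.symm_apply_apply (a, b))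

theorem finProdFinEquiv_divNat_modNat (i : Fin (m * n)) :
    finProdFinEquiv (i.divNat, i.modNat) = i :=
  finProdFinEquiv.apply_symm_apply i

theorem card_filter_eq_sum_blocks (P : Fin (m * n) → Prop) [DecidablePred P] :
    #{i | P i} = ∑ a, #{b | P (finProdFinEquiv (a, b))} := by
  simp only [card_filter]
  rw [← finProdFinEquiv.sum_comp, Fintype.sum_prod_type]

variable {R : Type*}

def blockVec (u : Fin (m * n) → R) (a : Fin m) : Fin n → R :=
  fun b => u (finProdFinEquiv (a, b))

def ofBlockVecs (w : Fin m → Fin n → R) : Fin (m * n) → R :=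
  fun i => w i.divNat i.modNat

@[simp] theorem blockVec_ofBlockVecs (w : Fin m → Fin n → R) : blockVec (ofBlockVecs w) = w := by
  funext a b
  simp [blockVec, ofBlockVecs]

@[simp] theorem blockVec_zero [Zero R] : blockVec (0 : Fin (m * n) → R) = 0 := rfl

theorem eq_zero_of_blockVec_eq_zero [Zero R] {u : Fin (m * n) → R}
    (h : ∀ a, blockVec u a = 0) : u = 0 := by
  funext i
  rw [← finProdFinEquiv_divNat_modNat i]
  exact congrFun (h _) _

theorem hammingNorm_eq_sum_blockVec [Zero R] [DecidableEq R] (u : Fin (m * n) → R) :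
    hammingNorm u = ∑ a, hammingNorm (blockVec u a) :=
  card_filter_eq_sum_blocks _

def blockSet (I : Finset (Fin (m * n))) (a : Fin m) : Finset (Fin n) :=
  {b | finProdFinEquiv (a, b) ∈ I}

def ofBlockSets (J : Fin m → Finset (Fin n)) : Finset (Fin (m * n)) :=
  {i | i.modNat ∈ J i.divNat}

theorem card_eq_sum_card_blockSet (I : Finset (Fin (m * n))) :
    I.card = ∑ a, (blockSet I a).card := by
  simpa only [filter_univ_mem, blockSet] using card_filter_eq_sum_blocks (· ∈ I)

@[simp] theorem blockSet_ofBlockSets (J : Fin m → Finset (Fin n)) :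
    blockSet (ofBlockSets J) = J := by
  funext a
  ext b
  simp [blockSet, ofBlockSets]

theorem ofBlockSets_blockSet (I : Finset (Fin (m * n))) : ofBlockSets (blockSet I) = I := by
  ext i
  simp [blockSet, ofBlockSets, finProdFinEquiv_divNat_modNat]

theorem support_blockVec_subset [Zero R] {u : Fin (m * n) → R} {I : Finset (Fin (m * n))}
    (h : Function.support u ⊆ I) (a : Fin m) :
    Function.support (blockVec u a) ⊆ blockSet I a :=
  fun b hb => by simpa [blockSet] using h hb

theorem support_ofBlockVecs_subset [Zero R] {w : Fin m → Fin n → R}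
    {J : Fin m → Finset (Fin n)} (h : ∀ a, Function.support (w a) ⊆ J a) :
    Function.support (ofBlockVecs w) ⊆ ofBlockSets J :=
  fun i hi => by simpa [ofBlockSets] using h i.divNat hi

theorem blockVec_vecMul_kron (A : Matrix (Fin m) (Fin m) F2) (B : Matrix (Fin n) (Fin n) F2)
    (u : Fin (m * n) → F2) (a : Fin m) :
    blockVec (u ᵥ* kron A B) a = ∑ c, A c a • (blockVec u c ᵥ* B) := by
  funext d
  simp only [blockVec, vecMul, dotProduct, kron, Finset.sum_apply, Pi.smul_apply, smul_eq_mul,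
    divNat_finProdFinEquiv, modNat_finProdFinEquiv]
  rw [← finProdFinEquiv.sum_comp, Fintype.sum_prod_type]
  refine sum_congr rfl fun c _ => ?_
  simp only [divNat_finProdFinEquiv, modNat_finProdFinEquiv, mul_sum]
  exact sum_congr rfl fun b _ => by ring

end Blocks

section KronT2

variable {N : ℕ} (G : Matrix (Fin N) (Fin N) F2)

theorem hammingNorm_vecMul_kron_T2 (u : Fin (2 * N) → F2) :
    hammingNorm (u ᵥ* kron T2 G) =
      hammingNorm ((blockVec u 0 + blockVec u 1) ᵥ* G) + hammingNorm (blockVec u 1 ᵥ* G) := by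
  rw [hammingNorm_eq_sum_blockVec, Fin.sum_univ_two, blockVec_vecMul_kron, blockVec_vecMul_kron]
  simp [Fin.sum_univ_two, T2, add_vecMul]

theorem le_spec_kron_T2_of_split {a b : ℕ} (hab : 1 ≤ a + b) (ha : a ≤ N) (hb : b ≤ N) {m : ℕ}
    (hma : 1 ≤ a → m ≤ 2 * spec G a) (hmb : 1 ≤ b → m ≤ spec G b) :
    m ≤ spec (kron T2 G) (a + b) := by
  obtain ⟨I₀, hI₀, hI₀G⟩ := exists_card_eq_minDistGE_spec G hb
  obtain ⟨I₁, hI₁, hI₁G⟩ := exists_card_eq_minDistGE_spec G ha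
  refine (le_spec_iff _ hab (by omega) m).2 ⟨ofBlockSets ![I₀, I₁], ?_, ?_⟩
  · rw [card_eq_sum_card_blockSet, blockSet_ofBlockSets, Fin.sum_univ_two]
    simp [hI₀, hI₁, add_comm]
  intro u hu hsupp
  have hu₀ : Function.support (blockVec u 0) ⊆ I₀ := by
    simpa using support_blockVec_subset hsupp 0
  have hu₁ : Function.support (blockVec u 1) ⊆ I₁ := by
    simpa using support_blockVec_subset hsupp 1
  rw [hammingNorm_vecMul_kron_T2]
  by_cases h₀ : blockVec u 0 = 0
  · have h₁ : blockVec u 1 ≠ 0 := fun h₁ =>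
      hu (eq_zero_of_blockVec_eq_zero (Fin.forall_fin_two.2 ⟨h₀, h₁⟩))
    obtain ⟨i, hi⟩ := Function.support_nonempty_iff.2 h₁
    have ha1 : 1 ≤ a := hI₁ ▸ card_pos.2 ⟨i, hu₁ hi⟩
    have := hI₁G _ h₁ hu₁
    rw [h₀, zero_add]
    linarith [hma ha1]
  · obtain ⟨i, hi⟩ := Function.support_nonempty_iff.2 h₀
    have hb1 : 1 ≤ b := hI₀ ▸ card_pos.2 ⟨i, hu₀ hi⟩
    calc m ≤ spec G b := hmb hb1
      _ ≤ hammingNorm (blockVec u 0 ᵥ* G) := hI₀G _ h₀ hu₀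
      _ = hammingNorm ((blockVec u 0 + blockVec u 1) ᵥ* G - blockVec u 1 ᵥ* G) := by
        rw [← sub_vecMul, add_sub_cancel_right]
      _ ≤ _ := hammingNorm_sub_le _ _

theorem exists_split_of_le_spec_kron_T2 {K : ℕ} (hK1 : 1 ≤ K) (hK : K ≤ 2 * N) {m : ℕ}
    (hm : m ≤ spec (kron T2 G) K) :
    ∃ a b, a + b = K ∧ a ≤ N ∧ b ≤ N ∧
      (1 ≤ a → m ≤ 2 * spec G a) ∧ (1 ≤ b → m ≤ spec G b) := by
  obtain ⟨I, hIK, hI⟩ := (le_spec_iff _ hK1 hK m).1 hm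
  have hsplit := card_eq_sum_card_blockSet I
  rw [Fin.sum_univ_two] at hsplit
  have hcard (a : Fin 2) : (blockSet I a).card ≤ N :=
    (card_le_univ _).trans_eq (Fintype.card_fin N)
  have hlift {u₀ u₁ : Fin N → F2} (h₀ : Function.support u₀ ⊆ blockSet I 0)
      (h₁ : Function.support u₁ ⊆ blockSet I 1) :
      Function.support (ofBlockVecs ![u₀, u₁]) ⊆ I := by
    rw [← ofBlockSets_blockSet I]
    exact support_ofBlockVecs_subset (Fin.forall_fin_two.2 ⟨h₀, h₁⟩)
  refine ⟨(blockSet I 1).card, (blockSet I 0).card, by omega, hcard 1, hcard 0, fun ha => ?_,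
    fun hb => (le_spec_iff G hb (hcard 0) m).2 ⟨_, rfl, fun u₀ hu₀ hsupp => ?_⟩⟩
  · suffices (m + 1) / 2 ≤ spec G (blockSet I 1).card by omega
    refine (le_spec_iff G ha (hcard 1) _).2 ⟨_, rfl, fun u₁ hu₁ hsupp => ?_⟩
    have hu : ofBlockVecs ![0, u₁] ≠ 0 := fun h => hu₁ (by
      simpa using congrArg (blockVec · 1) h)
    have := hI _ hu (hlift (by simp) hsupp)
    rw [hammingNorm_vecMul_kron_T2] at this
    simp only [blockVec_ofBlockVecs, cons_val_zero, cons_val_one, zero_add] at this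
    omega
  · have hu : ofBlockVecs ![u₀, 0] ≠ 0 := fun h => hu₀ (by
      simpa using congrArg (blockVec · 0) h)
    have := hI _ hu (hlift hsupp (by simp))
    rw [hammingNorm_vecMul_kron_T2] at this
    simpa using this

theorem seqValues_spec_kron_T2 :
    seqValues (2 * N) (spec (kron T2 G)) =
      (seqValues N (spec G)).map (2 * ·) + seqValues N (spec G) := by
  have h2 : AntitoneOn (2 * spec G ·) (Set.Icc 1 N) := fun a ha b hb hab =>
    Nat.mul_le_mul_left 2 (spec_antitoneOn G ha hb hab)
  rw [map_seqValues]
  set M := seqValues N (2 * spec G ·) + seqValues N (spec G)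
  have hM : Multiset.card M = 2 * N := by
    rw [Multiset.card_add, card_seqValues, card_seqValues]; omega
  rw [← seqValues_kthLargest M, hM]
  refine seqValues_congr fun K hK1 hK => eq_of_forall_le_iff fun m => ?_
  rw [le_kthLargest_seqValues_add_iff h2 (spec_antitoneOn G) hK1 (by omega)]
  constructor
  · exact exists_split_of_le_spec_kron_T2 G hK1 hK
  · rintro ⟨a, b, rfl, ha, hb, hma, hmb⟩
    exact le_spec_kron_T2_of_split G hK1 ha hb hma hmb

end KronT2

section Reindexing

theorem spec_submatrix_cast {N N' : ℕ} (h : N' = N) (G : Matrix (Fin N) (Fin N) F2) :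
    spec (G.submatrix (Fin.cast h) (Fin.cast h)) = spec G := by
  subst h
  rfl

theorem kron_submatrix_cast {m m' n : ℕ} (h : m' = m) (A : Matrix (Fin m) (Fin m) F2)
    (B : Matrix (Fin n) (Fin n) F2) :
    kron (A.submatrix (Fin.cast h) (Fin.cast h)) B =
      (kron A B).submatrix (Fin.cast (by rw [h])) (Fin.cast (by rw [h])) := by
  subst h
  rfl

theorem kron_assoc {a b c : ℕ} (A : Matrix (Fin a) (Fin a) F2) (B : Matrix (Fin b) (Fin b) F2)
    (C : Matrix (Fin c) (Fin c) F2) :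
    kron (kron A B) C =
      (kron A (kron B C)).submatrix (Fin.cast (Nat.mul_assoc a b c))
        (Fin.cast (Nat.mul_assoc a b c)) := by
  have hdiv (i : Fin (a * b * c)) : i.divNat.divNat = (Fin.cast (Nat.mul_assoc a b c) i).divNat :=
    Fin.ext (by simp [Nat.div_div_eq_div_mul, Nat.mul_comm c b])
  have hmid (i : Fin (a * b * c)) :
      i.divNat.modNat = (Fin.cast (Nat.mul_assoc a b c) i).modNat.divNat :=
    Fin.ext (by simp [Nat.mul_comm b c, Nat.mod_mul_right_div_self])
  have hmod (i : Fin (a * b * c)) : i.modNat = (Fin.cast (Nat.mul_assoc a b c) i).modNat.modNat :=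
    Fin.ext (by simp [Nat.mod_mod_of_dvd _ (dvd_mul_left c b)])
  funext i j
  simp only [kron, submatrix_apply, hdiv, hmid, hmod, mul_assoc]

theorem kron_one_left {n : ℕ} (B : Matrix (Fin n) (Fin n) F2) :
    kron (1 : Matrix (Fin 1) (Fin 1) F2) B =
      B.submatrix (Fin.cast (one_mul n)) (Fin.cast (one_mul n)) := by
  funext i j
  have hmod (k : Fin (1 * n)) : k.modNat = Fin.cast (one_mul n) k :=
    Fin.ext (Nat.mod_eq_of_lt (by simpa using k.isLt))
  simp only [kron, submatrix_apply]
  rw [Subsingleton.elim i.divNat j.divNat, one_apply_eq, one_mul, hmod, hmod]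

end Reindexing

theorem spec_T2pow_succ (n : ℕ) : spec (T2pow (n + 1)) = spec (kron T2 (T2pow n)) :=
  spec_submatrix_cast _ _

theorem spec_kron_T2pow_zero {p : ℕ} (Tp : Matrix (Fin p) (Fin p) F2) :
    spec (kron (T2pow 0) Tp) = spec Tp :=
  (congrArg spec (kron_one_left Tp)).trans (spec_submatrix_cast _ _)

theorem spec_kron_T2pow_succ (n : ℕ) {p : ℕ} (Tp : Matrix (Fin p) (Fin p) F2) :
    spec (kron (T2pow (n + 1)) Tp) = spec (kron T2 (kron (T2pow n) Tp)) := by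
  rw [T2pow, kron_submatrix_cast, spec_submatrix_cast, kron_assoc, spec_submatrix_cast]

theorem seqValues_spec_kron_T2pow (n : ℕ) {p : ℕ} (Tp : Matrix (Fin p) (Fin p) F2) :
    seqValues (2 ^ n * p) (spec (kron (T2pow n) Tp)) =
      pairwiseProducts (seqValues (2 ^ n) (spec (T2pow n))) (seqValues p (spec Tp)) := by
  induction n with
  | zero =>
    have hone : seqValues (2 ^ 0) (spec (T2pow 0)) = {1} :=
      (seqValues_one _).trans (congrArg _ (spec_one (N := 1) le_rfl le_rfl))
    rw [hone, pairwiseProducts_singleton_one_left, spec_kron_T2pow_zero, pow_zero, one_mul]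
  | succ n ih =>
    rw [spec_kron_T2pow_succ, spec_T2pow_succ, pow_succ', mul_assoc, seqValues_spec_kron_T2,
      seqValues_spec_kron_T2, ih, pairwiseProducts_add_left, pairwiseProducts_map_mul_left]

theorem spectrum_of_kron_T2pow_general
    (p : ℕ) (Tp : Matrix (Fin p) (Fin p) F2)
    (n : ℕ) (K : ℕ) (hK1 : 1 ≤ K) (hK2 : K ≤ 2 ^ n * p) :
    spec (kron (T2pow n) Tp) K =
      kthLargest
        (((Finset.univ : Finset (Fin (2 ^ n) × Fin p)).val).map
          (fun ij => spec (T2pow n) (ij.1.val + 1) * spec Tp (ij.2.val + 1))) K := by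
  rw [map_univ_prod_eq_pairwiseProducts, ← seqValues_spec_kron_T2pow,
    kthLargest_seqValues (spec_antitoneOn _) hK1 hK2]

theorem spectrum_of_kron_T2pow
    (p : ℕ) (hp : 1 ≤ p) (Tp : Matrix (Fin p) (Fin p) F2) (hTp : IsUnit Tp)
    (n : ℕ) (K : ℕ) (hK1 : 1 ≤ K) (hK2 : K ≤ 2 ^ n * p) :
    spec (kron (T2pow n) Tp) K =
      kthLargest
        (((Finset.univ : Finset (Fin (2 ^ n) × Fin p)).val).map
          (fun ij => spec (T2pow n) (ij.1.val + 1) * spec Tp (ij.2.val + 1))) K :=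
  spectrum_of_kron_T2pow_general p Tp n K hK1 hK2
end
end

section
/- Let n ≥ 0 and G = T₂^{⊗n}, a 2^n × 2^n invertible matrix over F₂. For every K with 1 ≤ K ≤ 2^n, the spectrum value S_G(K) equals the K-th largest element (with multiplicity) of the multiset { 2^{w(i)} : 0 ≤ i ≤ 2^n − 1 }, where w(i) denotes the number of ones in the binary representation of i. Equivalently, the minimum-distance spectrum of T₂^{⊗n} is the decreasingly sorted n-fold Kronecker power of the vector (2,1). -/
open Matrix

noncomputable section

/-! Split an index of `T₂^{⊗(n+1)}` into its leading bit and an index of `T₂^{⊗n}`, and a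
message accordingly as `u = (u₀, u₁)`; then `u · T₂^{⊗(n+1)} = ((u₀ + u₁) G, u₁ G)` with
`G = T₂^{⊗n}` (Plotkin's `(u + v | v)` construction). Induction along this splitting shows
that row `i` has weight `2^{w(i)}` and that every nonzero `u` satisfies
`wt(u G) ≥ min_{i ∈ supp u} 2^{w(i)}`, so `d_G(I) = min_{i ∈ I} 2^{w(i)}`. The largest
minimum over `K`-element sets is attained by the `K` largest row weights, i.e. it is the
`K`-th largest. -/

open Finset

def bitEquiv (n : ℕ) : Fin 2 × Fin (2 ^ n) ≃ Fin (2 ^ (n + 1)) :=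
  finProdFinEquiv.trans (finCongr (by rw [pow_succ, Nat.mul_comm]))

lemma bitEquiv_apply_val (n : ℕ) (a : Fin 2) (i : Fin (2 ^ n)) :
    (bitEquiv n (a, i) : ℕ) = i + 2 ^ n * a := rfl

lemma T2pow_succ_bitEquiv (n : ℕ) (a b : Fin 2) (i j : Fin (2 ^ n)) :
    T2pow (n + 1) (bitEquiv n (a, i)) (bitEquiv n (b, j)) = T2 a b * T2pow n i j := by
  have h (x : Fin 2 × Fin (2 ^ n)) :
      ((finProdFinEquiv x).divNat, (finProdFinEquiv x).modNat) = x :=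
    finProdFinEquiv.symm_apply_apply x
  simp only [T2pow, kron, bitEquiv, submatrix_apply, Equiv.trans_apply, finCongr_apply,
    Fin.cast_cast, Fin.cast_eq_self]
  simp only [Prod.ext_iff] at h
  rw [(h _).1, (h _).1, (h _).2, (h _).2]

def bitHalf {n : ℕ} {α : Type*} (v : Fin (2 ^ (n + 1)) → α) (a : Fin 2) :
    Fin (2 ^ n) → α :=
  fun i => v (bitEquiv n (a, i))

lemma sum_eq_add_bitHalf {M : Type*} [AddCommMonoid M] {n : ℕ} (g : Fin (2 ^ (n + 1)) → M) :
    ∑ x, g x = ∑ i, bitHalf g 0 i + ∑ i, bitHalf g 1 i := by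
  rw [← (bitEquiv n).sum_comp, Fintype.sum_prod_type, Fin.sum_univ_two]
  rfl

lemma hammingNorm_eq_add_bitHalf {n : ℕ} {β : Type*} [Zero β] [DecidableEq β]
    (v : Fin (2 ^ (n + 1)) → β) :
    hammingNorm v = hammingNorm (bitHalf v 0) + hammingNorm (bitHalf v 1) := by
  simp only [hammingNorm, card_filter]
  exact sum_eq_add_bitHalf _

lemma bitHalf_vecMul_T2pow_succ {n : ℕ} (u : Fin (2 ^ (n + 1)) → F2) (b : Fin 2) :
    bitHalf (u ᵥ* T2pow (n + 1)) b = ∑ a, T2 a b • (bitHalf u a ᵥ* T2pow n) := by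
  ext j
  simp only [bitHalf, vecMul, dotProduct, ← (bitEquiv n).sum_comp, Fintype.sum_prod_type,
    T2pow_succ_bitEquiv, Finset.sum_apply, Pi.smul_apply, smul_eq_mul, mul_sum]
  exact sum_congr rfl fun _ _ => sum_congr rfl fun _ _ => by ring

lemma hammingNorm_vecMul_T2pow_succ {n : ℕ} (u : Fin (2 ^ (n + 1)) → F2) :
    hammingNorm (u ᵥ* T2pow (n + 1)) =
      hammingNorm ((bitHalf u 0 + bitHalf u 1) ᵥ* T2pow n) +
        hammingNorm (bitHalf u 1 ᵥ* T2pow n) := by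
  rw [hammingNorm_eq_add_bitHalf, bitHalf_vecMul_T2pow_succ, bitHalf_vecMul_T2pow_succ]
  simp [Fin.sum_univ_two, T2, add_vecMul]

lemma digits_sum_add_two_pow {n i : ℕ} (hi : i < 2 ^ n) :
    (Nat.digits 2 (i + 2 ^ n)).sum = (Nat.digits 2 i).sum + 1 := by
  have hlen : (Nat.digits 2 i).length ≤ n := (Nat.digits_length_le_iff (by norm_num) i).2 hi
  have h := Nat.digits_append_zeroes_append_digits (b := 2) (k := n - (Nat.digits 2 i).length)
    (m := 1) (n := i) (by norm_num) one_pos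
  rw [Nat.add_sub_cancel' hlen, mul_one] at h
  rw [← h]
  simp

def bitWeight (i : ℕ) : ℕ := 2 ^ (Nat.digits 2 i).sum

lemma bitWeight_bitEquiv (n : ℕ) (a : Fin 2) (i : Fin (2 ^ n)) :
    bitWeight (bitEquiv n (a, i)) = 2 ^ (a : ℕ) * bitWeight i := by
  rw [bitEquiv_apply_val]
  fin_cases a
  · simp
  · simp only [mul_one, bitWeight, digits_sum_add_two_pow i.isLt]
    ring

lemma hammingNorm_T2pow_row {n : ℕ} (i : Fin (2 ^ n)) :
    hammingNorm (T2pow n i) = bitWeight i := by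
  induction n with
  | zero =>
    obtain rfl : i = 0 := Fin.fin_one_eq_zero i
    decide
  | succ n ih =>
    obtain ⟨⟨a, i⟩, rfl⟩ := (bitEquiv n).surjective i
    have hhalf (b : Fin 2) :
        bitHalf (T2pow (n + 1) (bitEquiv n (a, i))) b = T2 a b • T2pow n i := by
      ext j
      exact T2pow_succ_bitEquiv n a b i j
    rw [hammingNorm_eq_add_bitHalf, hhalf, hhalf, bitWeight_bitEquiv, ← ih]
    fin_cases a <;> simp [T2, two_mul]

lemma le_hammingNorm_vecMul_T2pow {n : ℕ} {u : Fin (2 ^ n) → F2} (hu : u ≠ 0) {d : ℕ}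
    (hd : ∀ i, u i ≠ 0 → d ≤ bitWeight i) : d ≤ hammingNorm (u ᵥ* T2pow n) := by
  induction n generalizing d with
  | zero =>
    obtain ⟨i, hi⟩ := Function.ne_iff.1 hu
    calc d ≤ 1 := by simpa [bitWeight, Fin.fin_one_eq_zero i] using hd i hi
      _ ≤ hammingNorm (u ᵥ* T2pow 0) := by
        rw [T2pow, vecMul_one]
        exact hammingNorm_pos_iff.2 hu
  | succ n ih =>
    rw [hammingNorm_vecMul_T2pow_succ]
    set u₀ := bitHalf u 0
    set u₁ := bitHalf u 1
    have hd₀ (i) (hi : u₀ i ≠ 0) : d ≤ bitWeight i := by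
      simpa [bitWeight_bitEquiv] using hd _ hi
    have hd₁ (i) (hi : u₁ i ≠ 0) : d ≤ 2 * bitWeight i := by
      simpa [bitWeight_bitEquiv] using hd _ hi
    by_cases h₁ : u₁ = 0
    · have h₀ : u₀ ≠ 0 := fun h₀ => hu <| funext fun x => by
        obtain ⟨⟨a, i⟩, rfl⟩ := (bitEquiv n).surjective x
        fin_cases a
        exacts [congrFun h₀ i, congrFun h₁ i]
      rw [h₁, add_zero]
      exact (ih h₀ hd₀).trans le_self_add
    by_cases hs : u₀ + u₁ = 0
    · have h₀₁ : u₀ = u₁ := CharTwo.add_eq_zero.1 hs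
      refine (ih h₁ fun i hi => ?_).trans le_add_self
      exact hd₀ i (h₀₁ ▸ hi)
    -- a leading bit doubles the row weight, so both halves still have weight `≥ ⌈d/2⌉`
    · have hs' (i) (hi : (u₀ + u₁) i ≠ 0) : (d + 1) / 2 ≤ bitWeight i := by
        by_cases h₀ : u₀ i = 0
        · have := hd₁ i (by simpa [h₀] using hi)
          omega
        · have := hd₀ i h₀
          omega
      have := ih hs hs'
      have := ih (d := (d + 1) / 2) h₁ fun i hi => by have := hd₁ i hi; omega
      omega

section KthLargest

variable {α : Type*} [LinearOrder α]

lemma isGreatest_inf'_of_monotone {N K : ℕ} {g : Fin N → α} (hg : Monotone g)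
    (hK1 : 1 ≤ K) (hK2 : K ≤ N) :
    IsGreatest {d | ∃ I : Finset (Fin N), #I = K ∧ ∃ h : I.Nonempty, I.inf' h g = d}
      (g ⟨N - K, by omega⟩) := by
  set t : Fin N := ⟨N - K, by omega⟩
  refine ⟨⟨Ici t, by simp [t]; omega, nonempty_Ici, ?_⟩, ?_⟩
  · exact le_antisymm (inf'_le _ (mem_Ici.2 le_rfl)) (le_inf' _ _ fun i hi => hg (mem_Ici.1 hi))
  · rintro _ ⟨I, hcard, hI, rfl⟩
    have : ¬ I ⊆ Ioi t := fun h => by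
      have := card_le_card h
      simp [t] at this
      omega
    obtain ⟨i, hi, hit⟩ := not_subset.1 this
    exact (inf'_le _ hi).trans (hg (not_lt.1 (by simpa using hit)))

lemma setOf_inf'_comp_equiv {ι ι' : Type*} (e : ι ≃ ι') (f : ι' → α) (K : ℕ) :
    {d | ∃ I : Finset ι, #I = K ∧ ∃ h : I.Nonempty, I.inf' h (f ∘ e) = d} =
      {d | ∃ I : Finset ι', #I = K ∧ ∃ h : I.Nonempty, I.inf' h f = d} := by
  ext d
  constructor
  · rintro ⟨I, hcard, hI, rfl⟩
    exact ⟨I.map e.toEmbedding, by simpa using hcard, hI.map, by simp [inf'_map]⟩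
  · rintro ⟨I, hcard, hI, rfl⟩
    refine ⟨I.map e.symm.toEmbedding, by simpa using hcard, hI.map, ?_⟩
    simp [inf'_map]

lemma sort_univ_map_eq_ofFn {N : ℕ} (f : Fin N → ℕ) :
    (univ.val.map f).sort (· ≤ ·) = List.ofFn (f ∘ Tuple.sort f) := by
  have hperm : univ.val.map f = ↑(List.ofFn (f ∘ Tuple.sort f)) := by
    rw [← Fin.univ_val_map, ← Multiset.map_map, Multiset.map_univ_val_equiv]
  rw [hperm, Multiset.coe_sort]
  exact List.mergeSort_eq_self _ (List.pairwise_ofFn.2 fun i j h => Tuple.monotone_sort f h.le)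

lemma kthLargest_univ_map {N K : ℕ} (f : Fin N → ℕ) (hK1 : 1 ≤ K) (hK2 : K ≤ N) :
    kthLargest (univ.val.map f) K = f (Tuple.sort f ⟨N - K, by omega⟩) := by
  rw [kthLargest, sort_univ_map_eq_ofFn, List.getD_eq_getElem _ _ (by simp; omega),
    List.getElem_reverse]
  simp only [List.getElem_ofFn, Function.comp_apply, List.length_ofFn]
  congr 3
  omega

lemma sSup_inf'_card_eq_kthLargest {N K : ℕ} (f : Fin N → ℕ) (hK1 : 1 ≤ K) (hK2 : K ≤ N) :
    sSup {d | ∃ I : Finset (Fin N), #I = K ∧ ∃ h : I.Nonempty, I.inf' h f = d} =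
      kthLargest (univ.val.map f) K := by
  rw [kthLargest_univ_map f hK1 hK2, ← setOf_inf'_comp_equiv (Tuple.sort f)]
  exact (isGreatest_inf'_of_monotone (Tuple.monotone_sort f) hK1 hK2).csSup_eq

end KthLargest

lemma Fin.univ_val_map_eq_range_map {α : Type*} (N : ℕ) (g : ℕ → α) :
    univ.val.map (fun i : Fin N => g i) = (Multiset.range N).map g := by
  rw [Fin.univ_val_map, List.ofFn_eq_map, ← Multiset.coe_range,
    ← List.map_coe_finRange_eq_range, Multiset.map_coe, List.map_map]
  rfl

lemma minDist_T2pow {n : ℕ} {I : Finset (Fin (2 ^ n))} (hI : I.Nonempty) :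
    minDist (T2pow n) I = I.inf' hI (fun i => bitWeight i) := by
  obtain ⟨i₀, hi₀, hmin⟩ := exists_mem_eq_inf' hI (fun i => bitWeight i)
  have hmem : bitWeight i₀ ∈
      {w | ∃ u : Fin (2 ^ n) → F2, u ≠ 0 ∧ (∀ i, u i ≠ 0 → i ∈ I) ∧
        hammingNorm (u ᵥ* T2pow n) = w} := by
    refine ⟨Pi.single i₀ 1, by simp, fun i hi => ?_, ?_⟩
    · by_contra hiI
      exact hi (Pi.single_eq_of_ne (ne_of_mem_of_not_mem hi₀ hiI).symm 1)
    · rw [single_one_vecMul]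
      exact hammingNorm_T2pow_row i₀
  rw [hmin]
  refine le_antisymm (Nat.sInf_le hmem) (le_csInf ⟨_, hmem⟩ ?_)
  rintro _ ⟨u, hu, hsupp, rfl⟩
  exact le_hammingNorm_vecMul_T2pow hu fun i hi => hmin ▸ inf'_le _ (hsupp i hi)

theorem spectrum_T2pow
    (n : ℕ) (K : ℕ) (hK1 : 1 ≤ K) (hK2 : K ≤ 2 ^ n) :
    spec (T2pow n) K =
      kthLargest
        ((Multiset.range (2 ^ n)).map (fun i => 2 ^ (Nat.digits 2 i).sum)) K := by
  have hset : {d | ∃ I : Finset (Fin (2 ^ n)), #I = K ∧ minDist (T2pow n) I = d} =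
      {d | ∃ I : Finset (Fin (2 ^ n)), #I = K ∧
        ∃ h : I.Nonempty, I.inf' h (fun i => bitWeight i) = d} := by
    ext d
    refine exists_congr fun I => and_congr_right fun hcard => ?_
    have hI : I.Nonempty := card_pos.1 (by omega)
    exact ⟨fun h => ⟨hI, (minDist_T2pow hI).symm.trans h⟩,
      fun ⟨_, h⟩ => (minDist_T2pow hI).trans h⟩
  rw [spec, hset, sSup_inf'_card_eq_kthLargest _ hK1 hK2, Fin.univ_val_map_eq_range_map]
  rfl
end
end

section
/- The minimum-distance spectrum of the kernel T₃ is (3,2,1); that is, S_{T₃}(1) = 3, S_{T₃}(2) = 2, and S_{T₃}(3) = 1. -/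
open Matrix

noncomputable section

/-- The kernel `T₃` from the paper. -/
def T3 : Matrix (Fin 3) (Fin 3) F2 := !![1, 1, 1; 1, 0, 1; 0, 1, 1]


lemma minDist_eq_aux (I : Finset (Fin 3)) (v : ℕ)
    (hmem : ∃ u : Fin 3 → F2, u ≠ 0 ∧ (∀ i, u i ≠ 0 → i ∈ I) ∧
      hammingNorm (Matrix.vecMul u T3) = v)
    (hlb : ∀ u : Fin 3 → F2, u ≠ 0 → (∀ i, u i ≠ 0 → i ∈ I) →
      v ≤ hammingNorm (Matrix.vecMul u T3)) :
    minDist T3 I = v := by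
  apply le_antisymm
  · exact Nat.sInf_le hmem
  · apply le_csInf ⟨v, hmem⟩
    rintro w ⟨u, hu, hs, rfl⟩
    exact hlb u hu hs

lemma spec_eq_aux (K v : ℕ)
    (hmem : ∃ I : Finset (Fin 3), I.card = K ∧ minDist T3 I = v)
    (hub : ∀ I : Finset (Fin 3), I.card = K → minDist T3 I ≤ v) :
    spec T3 K = v := by
  have hub' : ∀ d ∈ {d | ∃ I : Finset (Fin 3), I.card = K ∧ minDist T3 I = d}, d ≤ v := by
    rintro d ⟨I, hI, rfl⟩; exact hub I hI
  apply le_antisymm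
  · exact csSup_le ⟨v, hmem⟩ hub'
  · exact le_csSup ⟨v, hub'⟩ hmem

lemma minDist_0 : minDist T3 {0} = 3 := by
  apply minDist_eq_aux
  · exact ⟨![1,0,0], by decide, by decide, by decide⟩
  · decide

lemma minDist_12 : minDist T3 {1,2} = 2 := by
  apply minDist_eq_aux
  · exact ⟨![0,1,0], by decide, by decide, by decide⟩
  · decide

lemma minDist_univ : minDist T3 {0,1,2} = 1 := by
  apply minDist_eq_aux
  · exact ⟨![1,1,1], by decide, by decide, by decide⟩
  · decide

lemma minDist_le_3 (I : Finset (Fin 3)) (h : I.Nonempty) : minDist T3 I ≤ 3 := by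
  obtain ⟨i, hi⟩ := h
  have : minDist T3 I ≤ hammingNorm (Matrix.vecMul (Pi.single i 1) T3) := by
    apply Nat.sInf_le
    refine ⟨Pi.single i 1, ?_, ?_, rfl⟩
    · intro h0
      have := congrFun h0 i
      simp at this
    · intro j hj
      by_contra hji
      exact hj (Pi.single_eq_of_ne (by rintro rfl; exact hji hi) 1)
  refine this.trans ?_
  have : hammingNorm (Matrix.vecMul (Pi.single i 1) T3)
      ≤ Fintype.card (Fin 3) := hammingNorm_le_card_fintype
  simpa using this

theorem spectrum_T3 :
    spec T3 1 = 3 ∧ spec T3 2 = 2 ∧ spec T3 3 = 1 := by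
  refine ⟨?_, ?_, ?_⟩
  · apply spec_eq_aux
    · exact ⟨{0}, by decide, minDist_0⟩
    · intro I hI
      exact minDist_le_3 I (Finset.card_pos.mp (by omega))
  · apply spec_eq_aux
    · exact ⟨{1,2}, by decide, minDist_12⟩
    · intro I hI
      have : I = {0,1} ∨ I = {0,2} ∨ I = {1,2} := by
        revert hI; revert I; decide
      rcases this with rfl | rfl | rfl
      · calc minDist T3 {0,1} ≤ hammingNorm (Matrix.vecMul ![1,1,0] T3) :=
              Nat.sInf_le ⟨![1,1,0], by decide, by decide, rfl⟩
          _ ≤ 2 := by decide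
      · calc minDist T3 {0,2} ≤ hammingNorm (Matrix.vecMul ![1,0,1] T3) :=
              Nat.sInf_le ⟨![1,0,1], by decide, by decide, rfl⟩
          _ ≤ 2 := by decide
      · exact minDist_12.le
  · apply spec_eq_aux
    · exact ⟨{0,1,2}, by decide, minDist_univ⟩
    · intro I hI
      have : I = {0,1,2} := by revert hI; revert I; decide
      subst this
      exact minDist_univ.le
end
end

section
/- Let G₆ = T₂ ⊗ T₃, the 6×6 matrix over F₂ with rows (1,1,1,0,0,0), (1,0,1,0,0,0), (0,1,1,0,0,0), (1,1,1,1,1,1), (1,0,1,1,0,1), (0,1,1,0,1,1) (indexed 0,…,5). The minimum-distance spectrum of G₆ is (6,4,3,2,2,1); that is, S_{G₆}(1) = 6, S_{G₆}(2) = 4, S_{G₆}(3) = 3, S_{G₆}(4) = 2, S_{G₆}(5) = 2, and S_{G₆}(6) = 1. -/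
open Matrix

noncomputable section

/-- `G₆ = T₂ ⊗ T₃`. -/
def G6 : Matrix (Fin 6) (Fin 6) F2 := kron T2 T3



lemma minDist_eq_of {N d : ℕ} (G : Matrix (Fin N) (Fin N) F2) (I : Finset (Fin N))
    (h1 : ∃ u : Fin N → F2, u ≠ 0 ∧ (∀ i, u i ≠ 0 → i ∈ I) ∧
      hammingNorm (Matrix.vecMul u G) = d)
    (h2 : ∀ u : Fin N → F2, u ≠ 0 → (∀ i, u i ≠ 0 → i ∈ I) →
      d ≤ hammingNorm (Matrix.vecMul u G)) :
    minDist G I = d := by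
  obtain ⟨u, hu1, hu2, hu3⟩ := h1
  refine le_antisymm (Nat.sInf_le ⟨u, hu1, hu2, hu3⟩)
    (le_csInf ⟨d, u, hu1, hu2, hu3⟩ ?_)
  rintro w ⟨v, hv1, hv2, rfl⟩
  exact h2 v hv1 hv2

lemma spec_eq_of {N K d : ℕ} (G : Matrix (Fin N) (Fin N) F2)
    (h1 : ∃ I : Finset (Fin N), I.card = K ∧ minDist G I = d)
    (h2 : ∀ I : Finset (Fin N), I.card = K → ∃ u : Fin N → F2, u ≠ 0 ∧
      (∀ i, u i ≠ 0 → i ∈ I) ∧ hammingNorm (Matrix.vecMul u G) ≤ d) :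
    spec G K = d := by
  have hb : ∀ x ∈ {d | ∃ I : Finset (Fin N), I.card = K ∧ minDist G I = d}, x ≤ d := by
    rintro x ⟨I, hc, rfl⟩
    obtain ⟨u, hu1, hu2, hu3⟩ := h2 I hc
    exact le_trans (Nat.sInf_le ⟨u, hu1, hu2, rfl⟩) hu3
  exact le_antisymm (csSup_le ⟨d, h1⟩ hb) (le_csSup ⟨d, hb⟩ h1)

set_option maxRecDepth 20000 in
theorem spectrum_G6 :
    G6 = !![1, 1, 1, 0, 0, 0;
            1, 0, 1, 0, 0, 0;
            0, 1, 1, 0, 0, 0;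
            1, 1, 1, 1, 1, 1;
            1, 0, 1, 1, 0, 1;
            0, 1, 1, 0, 1, 1] ∧
    spec G6 1 = 6 ∧ spec G6 2 = 4 ∧ spec G6 3 = 3 ∧
    spec G6 4 = 2 ∧ spec G6 5 = 2 ∧ spec G6 6 = 1 := by
  have hG : G6 = !![1, 1, 1, 0, 0, 0;
            1, 0, 1, 0, 0, 0;
            0, 1, 1, 0, 0, 0;
            1, 1, 1, 1, 1, 1;
            1, 0, 1, 1, 0, 1;
            0, 1, 1, 0, 1, 1] := by decide
  refine ⟨hG, ?_, ?_, ?_, ?_, ?_, ?_⟩ <;> rw [hG]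
  · exact spec_eq_of _ ⟨{3}, by decide, minDist_eq_of _ _ (by decide) (by decide)⟩ (by decide)
  · exact spec_eq_of _ ⟨{4,5}, by decide, minDist_eq_of _ _ (by decide) (by decide)⟩ (by decide)
  · exact spec_eq_of _ ⟨{0,4,5}, by decide, minDist_eq_of _ _ (by decide) (by decide)⟩ (by decide)
  · exact spec_eq_of _ ⟨{2,3,4,5}, by decide, minDist_eq_of _ _ (by decide) (by decide)⟩ (by decide)
  · exact spec_eq_of _ ⟨{1,2,3,4,5}, by decide, minDist_eq_of _ _ (by decide) (by decide)⟩ (by decide)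
  · exact spec_eq_of _ ⟨Finset.univ, by decide, minDist_eq_of _ _ (by decide) (by decide)⟩ (by decide)
end
end

section
/- Let G₆ = T₂ ⊗ T₃, the 6×6 matrix over F₂ with rows (1,1,1,0,0,0), (1,0,1,0,0,0), (0,1,1,0,0,0), (1,1,1,1,1,1), (1,0,1,1,0,1), (0,1,1,0,1,1) (indexed 0,…,5). The information sets produced by the distance-based design achieve the optimal minimum distances: d_{G₆}({3}) = 6, d_{G₆}({4,5}) = 4, and d_{G₆}({0,4,5}) = 3. -/
open Matrix

noncomputable section

lemma minDist_eq {N : ℕ} (G : Matrix (Fin N) (Fin N) F2) (I : Finset (Fin N)) (d : ℕ)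
    (u : Fin N → F2) (hu : u ≠ 0) (hs : ∀ i, u i ≠ 0 → i ∈ I)
    (hw : hammingNorm (Matrix.vecMul u G) = d)
    (hlb : ∀ v : Fin N → F2, v ≠ 0 → (∀ i, v i ≠ 0 → i ∈ I) →
      d ≤ hammingNorm (Matrix.vecMul v G)) :
    minDist G I = d := by
  apply le_antisymm
  · exact Nat.sInf_le ⟨u, hu, hs, hw⟩
  · refine le_csInf ⟨d, u, hu, hs, hw⟩ ?_
    rintro w ⟨v, h1, h2, rfl⟩
    exact hlb v h1 h2

theorem distance_design_G6 :
    G6 = !![1, 1, 1, 0, 0, 0;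
            1, 0, 1, 0, 0, 0;
            0, 1, 1, 0, 0, 0;
            1, 1, 1, 1, 1, 1;
            1, 0, 1, 1, 0, 1;
            0, 1, 1, 0, 1, 1] ∧
    minDist G6 {3} = 6 ∧ minDist G6 {4, 5} = 4 ∧ minDist G6 {0, 4, 5} = 3 := by
  refine ⟨by decide, ?_, ?_, ?_⟩
  · exact minDist_eq _ _ _ (fun i => if i = 3 then 1 else 0) (by decide) (by decide) (by decide)
      (by decide)
  · exact minDist_eq _ _ _ (fun i => if i = 4 then 1 else 0) (by decide) (by decide) (by decide)
      (by decide)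
  · exact minDist_eq _ _ _ (fun i => if i = 0 then 1 else 0) (by decide) (by decide) (by decide)
      (by decide)
end
end
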